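/- arXiv:2301.10359 — 7 statements merged into one kernel-verified Lean document; each statement's English description precedes it below -/
import Mathlib

section
/- Let O be an order in an imaginary quadratic field K, and let L be a proper (invertible) fractional O-ideal which, viewed as a lattice in ℂ ≅ ℝ², is well rounded (i.e., there exist two ℝ-linearly independent minimal vectors forming a ℤ-basis of L). Then L² is a principal fractional O-ideal, i.e., the class of L in the proper ideal class group of O has order dividing 2. -/
open Pointwise

/-- A (full-rank) lattice in the plane `ℂ ≅ ℝ²`. -/
def IsLattice (L : AddSubgroup ℂ) : Prop :=
  ∃ v w : ℂ, LinearIndependent ℝ ![v, w] ∧ L = AddSubgroup.closure {v, w}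

/-- The product of two lattices (fractional ideals) in `ℂ`: the additive
group generated by all products `x * y` with `x ∈ L`, `y ∈ M`. -/
noncomputable def latMul (L M : AddSubgroup ℂ) : AddSubgroup ℂ :=
  AddSubgroup.closure {z : ℂ | ∃ x ∈ L, ∃ y ∈ M, z = x * y}

/-!
Write the minimal basis of `L` as `v, τ v`. Equal lengths give `|τ| = 1`, and `τ` is not real.
As `τ` lies in the fraction field of the rank-two order `O`, it satisfies an integer quadratic
equation; since `τ̄ = τ⁻¹` is a root as well, the equation can be taken palindromic and
primitive, `a τ² + b τ + a = 0` with `gcd(a, b) = 1`. Then the coefficient ring of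
`L = ℤ v + ℤ τ v` is `ℤ + ℤ a τ`, and with `α = v · τ v / a` the generators `v², v · τ v, (τ v)²`
of `L²` are `α (-b - a τ), α a, α a τ`; by Bézout for `a, b` they generate `α (ℤ + ℤ a τ) = α O`.
-/

theorem not_linearIndependent_int_of_mem_closure {M ι : Type*} [AddCommGroup M] [Fintype ι]
    {s : Finset M} {a : ι → M} (ha : ∀ i, a i ∈ AddSubgroup.closure (s : Set M))
    (hcard : s.card < Fintype.card ι) : ¬LinearIndependent ℤ a := by
  intro hind
  have hspan (i : ι) : a i ∈ Submodule.span ℤ (s : Set M) := by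
    rw [← Submodule.mem_toAddSubgroup, Submodule.span_int_eq_addSubgroupClosure]
    exact ha i
  have hind' : LinearIndependent ℤ fun i ↦ (⟨a i, hspan i⟩ : Submodule.span ℤ (s : Set M)) :=
    .of_comp (Submodule.span ℤ _).subtype hind
  have := hind'.fintype_card_le_finrank.trans (finrank_span_finset_le_card s)
  omega

theorem exists_div_eq_div {K : Type*} [Field K] {O : Subring K} {v w : K} (hv0 : v ≠ 0)
    (hv : ∃ x ∈ O, ∃ y ∈ O, y ≠ 0 ∧ v = x / y) (hw : ∃ x ∈ O, ∃ y ∈ O, y ≠ 0 ∧ w = x / y) :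
    ∃ β ∈ O, ∃ γ ∈ O, γ ≠ 0 ∧ w / v = β / γ := by
  obtain ⟨x, hx, y, hy, hy0, rfl⟩ := hv
  obtain ⟨x', hx', y', hy', hy0', rfl⟩ := hw
  have hx0 : x ≠ 0 := by rintro rfl; simp at hv0
  exact ⟨x' * y, O.mul_mem hx' hy, y' * x, O.mul_mem hy' hx, mul_ne_zero hy0' hx0, by
    field_simp⟩

theorem exists_int_quadratic_of_div {K : Type*} [Field K] {O : Subring K} {p q : K}
    (hO : O.toAddSubgroup = AddSubgroup.closure {p, q}) {β γ : K} (hβ : β ∈ O) (hγ : γ ∈ O)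
    (hγ0 : γ ≠ 0) :
    ∃ x y z : ℤ, ¬(x = 0 ∧ y = 0 ∧ z = 0) ∧ z * (β / γ) ^ 2 + y * (β / γ) + x = 0 := by
  classical
  have hmem (t : K) (ht : t ∈ O) : t ∈ AddSubgroup.closure ((({p, q} : Finset K)) : Set K) := by
    rw [Finset.coe_pair, ← hO]; exact ht
  have hdep := not_linearIndependent_int_of_mem_closure (a := ![γ * γ, γ * β, β * β])
    (fun i ↦ by fin_cases i <;> exact hmem _ (by simp [O.mul_mem, hβ, hγ]))
    ((Finset.card_le_two).trans_lt (by simp))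
  obtain ⟨c, hc, i, hi⟩ := Fintype.not_linearIndependent_iff.mp hdep
  refine ⟨c 0, c 1, c 2, fun ⟨h0, h1, h2⟩ ↦ hi (by fin_cases i <;> assumption), ?_⟩
  simp only [Fin.sum_univ_three, Matrix.cons_val, zsmul_eq_mul] at hc
  field_simp
  linear_combination hc

theorem im_ne_zero_of_linearIndependent {v τ : ℂ} (h : LinearIndependent ℝ ![v, τ * v]) :
    τ.im ≠ 0 := by
  intro him
  have hre : (τ.re : ℂ) = τ := Complex.ext (by simp) (by simp [him])
  have := (LinearIndependent.pair_iff.mp h τ.re (-1) (by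
    rw [neg_one_smul, Complex.real_smul, hre, add_neg_eq_zero])).2
  norm_num at this

theorem int_eq_of_add_mul_eq {τ : ℂ} (hτ : τ.im ≠ 0) {r s r' s' : ℤ}
    (h : r + s * τ = r' + s' * τ) : r = r' ∧ s = s' := by
  have him := congrArg Complex.im h
  have hre := congrArg Complex.re h
  simp only [Complex.add_im, Complex.add_re, Complex.mul_im, Complex.mul_re, Complex.intCast_re,
    Complex.intCast_im, zero_mul, add_zero, zero_add, sub_zero] at him hre
  have hs : s = s' := by exact_mod_cast mul_right_cancel₀ hτ him
  subst hs
  exact ⟨by exact_mod_cast add_right_cancel hre, rfl⟩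

theorem int_coeff_eq_of_norm_eq_one {τ : ℂ} (hτ : ‖τ‖ = 1) (him : τ.im ≠ 0) {x y z : ℤ}
    (h : z * τ ^ 2 + y * τ + x = 0) : x = z := by
  have hconj : τ * (starRingEnd ℂ) τ = 1 := by
    rw [Complex.mul_conj, Complex.normSq_eq_norm_sq, hτ]; norm_num
  have h' : (z : ℂ) * τ + y + x * (starRingEnd ℂ) τ = 0 := by
    linear_combination (starRingEnd ℂ) τ * h - (z * τ + y) * hconj
  have him' := congrArg Complex.im h'
  simp only [Complex.add_im, Complex.mul_im, Complex.intCast_re, Complex.intCast_im,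
    Complex.conj_im, zero_mul, add_zero, Complex.zero_im] at him'
  have : ((x : ℝ) - z) * τ.im = 0 := by linear_combination -him'
  exact_mod_cast (sub_eq_zero.mp ((mul_eq_zero.mp this).resolve_right him))

theorem exists_coprime_palindromic_of_norm_eq_one {τ : ℂ} (hτ : ‖τ‖ = 1) (him : τ.im ≠ 0)
    (h : ∃ x y z : ℤ, ¬(x = 0 ∧ y = 0 ∧ z = 0) ∧ z * τ ^ 2 + y * τ + x = 0) :
    ∃ a b : ℤ, a ≠ 0 ∧ IsCoprime a b ∧ a * τ ^ 2 + b * τ + a = 0 := by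
  obtain ⟨x, y, z, hne, hq⟩ := h
  have hz : z ≠ 0 := by
    rintro rfl
    obtain ⟨hx, hy⟩ := int_eq_of_add_mul_eq him (r := x) (s := y) (r' := 0) (s' := 0)
      (by push_cast; linear_combination hq)
    exact hne ⟨hx, hy, rfl⟩
  obtain rfl := int_coeff_eq_of_norm_eq_one hτ him hq
  obtain ⟨g, a, b, hg, hab, rfl, rfl⟩ := Int.exists_gcd_one' (Int.gcd_pos_of_ne_zero_left y hz)
  refine ⟨a, b, by rintro rfl; simp at hz, Int.isCoprime_iff_gcd_eq_one.mpr hab, ?_⟩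
  have hg' : (g : ℂ) ≠ 0 := by exact_mod_cast hg.ne'
  apply mul_left_cancel₀ hg'
  push_cast at hq
  linear_combination hq

def coeffRing (L : AddSubgroup ℂ) : Set ℂ := {α | ∀ z ∈ L, α * z ∈ L}

theorem coeffRing_closure_pair {τ v : ℂ} {a b : ℤ} (him : τ.im ≠ 0) (hab : IsCoprime a b)
    (hrel : a * τ ^ 2 + b * τ + a = 0) (hv : v ≠ 0) :
    coeffRing (AddSubgroup.closure {v, τ * v}) = AddSubgroup.closure {1, a * τ} := by
  ext t
  simp only [coeffRing, Set.mem_ofPred_eq, SetLike.mem_coe, AddSubgroup.mem_closure_pair,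
    zsmul_eq_mul, forall_exists_index]
  constructor
  · intro ht
    obtain ⟨m, n, hmn⟩ := ht _ 1 0 rfl
    obtain ⟨m', n', hmn'⟩ := ht _ 0 1 rfl
    have htv : t = m + n * τ := mul_right_cancel₀ hv (by linear_combination -hmn)
    subst htv
    have hτt : (m + n * τ) * τ = m' + n' * τ := mul_right_cancel₀ hv (by linear_combination -hmn')
    have hcoord : ((-(n * a) : ℤ) : ℂ) + ((m * a - n * b : ℤ) : ℂ) * τ =
        ((m' * a : ℤ) : ℂ) + ((n' * a : ℤ) : ℂ) * τ := by
      push_cast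
      linear_combination a * hτt - n * hrel
    obtain ⟨k, rfl⟩ := hab.dvd_of_dvd_mul_right
      (show a ∣ n * b from ⟨m - n', by linarith [(int_eq_of_add_mul_eq him hcoord).2]⟩)
    exact ⟨m, k, by push_cast; ring⟩
  · rintro ⟨m, k, rfl⟩ _ m' n' rfl
    exact ⟨m * m' - k * n' * a, m * n' + k * a * m' - k * n' * b, by
      push_cast; linear_combination -(v * k * n') * hrel⟩

theorem mul_mem_latMul {L M : AddSubgroup ℂ} {x y : ℂ} (hx : x ∈ L) (hy : y ∈ M) :
    x * y ∈ latMul L M :=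
  AddSubgroup.subset_closure ⟨x, hx, y, hy, rfl⟩

theorem latMul_closure_pair_le {v w : ℂ} {H : AddSubgroup ℂ} (hvv : v * v ∈ H)
    (hvw : v * w ∈ H) (hww : w * w ∈ H) :
    latMul (AddSubgroup.closure {v, w}) (AddSubgroup.closure {v, w}) ≤ H := by
  refine (AddSubgroup.closure_le _).mpr ?_
  rintro _ ⟨x, hx, y, hy, rfl⟩
  obtain ⟨m, n, rfl⟩ := AddSubgroup.mem_closure_pair.mp hx
  obtain ⟨m', n', rfl⟩ := AddSubgroup.mem_closure_pair.mp hy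
  have hexpand : (m • v + n • w) * (m' • v + n' • w) =
      (m * m') • (v * v) + (m * n' + n * m') • (v * w) + (n * n') • (w * w) := by
    simp only [zsmul_eq_mul]; push_cast; ring
  rw [hexpand]
  exact add_mem (add_mem (zsmul_mem hvv _) (zsmul_mem hvw _)) (zsmul_mem hww _)

theorem smul_closure_pair (α x y : ℂ) :
    α • AddSubgroup.closure {x, y} = AddSubgroup.closure {α * x, α * y} := by
  change (AddSubgroup.closure _).map (DistribSMul.toAddMonoidHom ℂ α) = _
  rw [AddMonoidHom.map_closure, Set.image_pair]
  rfl

theorem latMul_closure_pair_eq_smul {τ v : ℂ} {a b : ℤ} (ha : a ≠ 0) (hab : IsCoprime a b)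
    (hrel : a * τ ^ 2 + b * τ + a = 0) :
    latMul (AddSubgroup.closure {v, τ * v}) (AddSubgroup.closure {v, τ * v}) =
      (v * (τ * v) / a) • AddSubgroup.closure {1, a * τ} := by
  have ha' : (a : ℂ) ≠ 0 := Int.cast_ne_zero.mpr ha
  have hv : v ∈ AddSubgroup.closure {v, τ * v} := AddSubgroup.subset_closure (by simp)
  have hw : τ * v ∈ AddSubgroup.closure {v, τ * v} := AddSubgroup.subset_closure (by simp)
  rw [smul_closure_pair, mul_one]
  apply le_antisymm
  · apply latMul_closure_pair_le <;> rw [AddSubgroup.mem_closure_pair] <;> simp only [zsmul_eq_mul]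
    · exact ⟨-b, -1, by field_simp; push_cast; linear_combination -v ^ 2 * hrel⟩
    · exact ⟨a, 0, by field_simp; push_cast; ring⟩
    · exact ⟨0, 1, by field_simp; push_cast; ring⟩
  · obtain ⟨u, u', hbez⟩ := hab
    have hbez' : (u : ℂ) * a + u' * b = 1 := by exact_mod_cast hbez
    rw [AddSubgroup.closure_le]
    rintro _ (rfl | rfl)
    · have hα : v * (τ * v) / a = u • (v * (τ * v)) + u' • (-(v * v) - τ * v * (τ * v)) := by
        simp only [zsmul_eq_mul]
        field_simp
        linear_combination u' * v ^ 2 * hrel - τ * v ^ 2 * hbez'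
      rw [SetLike.mem_coe, hα]
      exact add_mem (zsmul_mem (mul_mem_latMul hv hw) _) (zsmul_mem (sub_mem
        (neg_mem (mul_mem_latMul hv hv)) (mul_mem_latMul hw hw)) _)
    · have hαaτ : v * (τ * v) / a * (a * τ) = τ * v * (τ * v) := by field_simp
      rw [SetLike.mem_coe, hαaτ]
      exact mul_mem_latMul hw hw

theorem wellRounded_sq_principal_general (O : Subring ℂ) (hO : IsLattice O.toAddSubgroup)
    (L : AddSubgroup ℂ)
    (hfrac : ∀ z ∈ L, ∃ x ∈ O, ∃ y ∈ O, y ≠ 0 ∧ z = x / y)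
    (hproper : {α : ℂ | ∀ z ∈ L, α * z ∈ L} = (O : Set ℂ))
    (hWR : ∃ v w : ℂ, v ∈ L ∧ w ∈ L ∧ LinearIndependent ℝ ![v, w] ∧
      L = AddSubgroup.closure {v, w} ∧ ‖v‖ = ‖w‖ ∧
      ∀ u ∈ L, u ≠ 0 → ‖v‖ ≤ ‖u‖) :
    ∃ α : ℂ, α ≠ 0 ∧ latMul L L = α • O.toAddSubgroup := by
  obtain ⟨v, w, hvL, hwL, hind, rfl, hnorm, -⟩ := hWR
  have hv0 : v ≠ 0 := by simpa using hind.ne_zero 0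
  obtain ⟨τ, rfl⟩ : ∃ τ, w = τ * v := ⟨w / v, (div_mul_cancel₀ w hv0).symm⟩
  have hτ : ‖τ‖ = 1 := by simpa [norm_mul, hv0] using hnorm.symm
  have him := im_ne_zero_of_linearIndependent hind
  have hτ0 : τ ≠ 0 := fun h ↦ him (by simp [h])
  obtain ⟨β, hβ, γ, hγ, hγ0, hτβγ⟩ := exists_div_eq_div hv0 (hfrac v hvL) (hfrac _ hwL)
  rw [mul_div_cancel_right₀ _ hv0] at hτβγ
  obtain ⟨p, q, -, hpq⟩ := hO
  obtain ⟨a, b, ha, hab, hrel⟩ := exists_coprime_palindromic_of_norm_eq_one hτ him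
    (hτβγ ▸ exists_int_quadratic_of_div hpq hβ hγ hγ0)
  have hOτ : O.toAddSubgroup = AddSubgroup.closure {1, a * τ} :=
    SetLike.coe_injective (hproper.symm.trans (coeffRing_closure_pair him hab hrel hv0))
  exact ⟨_, div_ne_zero (mul_ne_zero hv0 (mul_ne_zero hτ0 hv0)) (Int.cast_ne_zero.mpr ha),
    hOτ ▸ latMul_closure_pair_eq_smul ha hab hrel⟩

/-- Let `O` be an order in an imaginary quadratic field (formalized as a
subring of `ℂ` which is a plane lattice), and let `L` be a proper fractional
`O`-ideal (a lattice contained in the fraction field of `O` whose coefficient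
ring is exactly `O`) which is well rounded (it has a ℤ-basis of two minimal
vectors).  Then `L² = L·L` is a principal fractional `O`-ideal `α O`. -/
theorem wellRounded_sq_principal (O : Subring ℂ) (hO : IsLattice O.toAddSubgroup)
    (L : AddSubgroup ℂ) (hL : IsLattice L)
    (hfrac : ∀ z ∈ L, ∃ x ∈ O, ∃ y ∈ O, y ≠ 0 ∧ z = x / y)
    (hproper : {α : ℂ | ∀ z ∈ L, α * z ∈ L} = (O : Set ℂ))
    (hWR : ∃ v w : ℂ, v ∈ L ∧ w ∈ L ∧ LinearIndependent ℝ ![v, w] ∧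
      L = AddSubgroup.closure {v, w} ∧ ‖v‖ = ‖w‖ ∧
      ∀ u ∈ L, u ≠ 0 → ‖v‖ ≤ ‖u‖) :
    ∃ α : ℂ, α ≠ 0 ∧ latMul L L = α • O.toAddSubgroup :=
  wellRounded_sq_principal_general O hO L hfrac hproper hWR
end

section
/- Let M ⊊ L be plane lattices with [L : M] = ℓ prime, both proper fractional ideals of a common order O in an imaginary quadratic field. Then p = (1/N(L)) · L̄ · M is a proper ideal of O with norm N(p) = ℓ, p is a maximal (hence prime) ideal of O, and M = p·L. -/
open Pointwise

/-- The complex conjugate lattice `L̄`. -/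
noncomputable def conjLat (L : AddSubgroup ℂ) : AddSubgroup ℂ :=
  L.map (starRingEnd ℂ).toAddMonoidHom

namespace LatAux

open AddSubgroup

lemma mem_latMul {A B : AddSubgroup ℂ} {x y : ℂ} (hx : x ∈ A) (hy : y ∈ B) :
    x * y ∈ latMul A B :=
  AddSubgroup.subset_closure ⟨x, hx, y, hy, rfl⟩

lemma latMul_le {A B C : AddSubgroup ℂ} :
    latMul A B ≤ C ↔ ∀ x ∈ A, ∀ y ∈ B, x * y ∈ C := by
  rw [latMul, AddSubgroup.closure_le]
  constructor
  · intro h x hx y hy; exact h ⟨x, hx, y, hy, rfl⟩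
  · rintro h z ⟨x, hx, y, hy, rfl⟩; exact h x hx y hy

lemma latMul_comm (A B : AddSubgroup ℂ) : latMul A B = latMul B A := by
  apply le_antisymm <;>
    (rw [latMul_le]; intro x hx y hy; rw [mul_comm]; exact mem_latMul hy hx)

lemma latMul_mono {A B A' B' : AddSubgroup ℂ} (h1 : A ≤ A') (h2 : B ≤ B') :
    latMul A B ≤ latMul A' B' := by
  rw [latMul_le]; intro x hx y hy; exact mem_latMul (h1 hx) (h2 hy)

lemma latMul_assoc (A B C : AddSubgroup ℂ) :
    latMul (latMul A B) C = latMul A (latMul B C) := by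
  apply le_antisymm
  · rw [latMul_le]
    intro z hz y hy
    have h : latMul A B ≤ (latMul A (latMul B C)).comap (AddMonoidHom.mulRight y) := by
      rw [latMul_le]; intro a ha b hb
      have : a * b * y = a * (b * y) := mul_assoc _ _ _
      simpa [AddSubgroup.mem_comap, this] using mem_latMul ha (mem_latMul hb hy)
    exact h hz
  · rw [latMul_le]
    intro a ha z hz
    have h : latMul B C ≤ (latMul (latMul A B) C).comap (AddMonoidHom.mulLeft a) := by
      rw [latMul_le]; intro b hb c hc
      have : a * (b * c) = a * b * c := (mul_assoc _ _ _).symm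
      simpa [AddSubgroup.mem_comap, this] using mem_latMul (mem_latMul ha hb) hc
    exact h hz

lemma smul_def (c : ℂ) (S : AddSubgroup ℂ) :
    c • S = S.map (DistribMulAction.toAddMonoidHom ℂ c) := rfl

lemma mem_smul {c x : ℂ} {S : AddSubgroup ℂ} :
    x ∈ c • S ↔ ∃ s ∈ S, c * s = x := by
  rw [AddSubgroup.mem_smul_pointwise_iff_exists]
  simp [smul_eq_mul]

lemma smul_mono (c : ℂ) {S T : AddSubgroup ℂ} (h : S ≤ T) : c • S ≤ c • T := by
  rw [smul_def, smul_def]; exact AddSubgroup.map_mono h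

lemma latMul_smul (c : ℂ) (A B : AddSubgroup ℂ) :
    latMul A (c • B) = c • latMul A B := by
  apply le_antisymm
  · rw [latMul_le]
    intro x hx y hy
    obtain ⟨b, hb, rfl⟩ := mem_smul.mp hy
    refine mem_smul.mpr ⟨x * b, mem_latMul hx hb, by ring⟩
  · rw [smul_def, AddSubgroup.map_le_iff_le_comap]
    rw [latMul_le]
    intro x hx y hy
    refine AddSubgroup.mem_comap.mpr ?_
    show c • (x * y) ∈ latMul A (c • B)
    have : c • (x * y) = x * (c * y) := by rw [smul_eq_mul]; ring
    rw [this]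
    exact mem_latMul hx (mem_smul.mpr ⟨y, hy, rfl⟩)

lemma smul_latMul (c : ℂ) (A B : AddSubgroup ℂ) :
    latMul (c • A) B = c • latMul A B := by
  rw [latMul_comm, latMul_smul, latMul_comm]

lemma relindex_smul_nat (S : AddSubgroup ℂ) (hS : IsLattice S) (ℓ : ℕ) (hl : ℓ ≠ 0) :
    ((ℓ : ℂ) • S).relIndex S = ℓ ^ 2 := by
  haveI : NeZero ℓ := ⟨hl⟩
  obtain ⟨v, w, hvw, rfl⟩ := hS
  set S := AddSubgroup.closure {v, w} with hSdef
  set f : ℤ × ℤ →+ ℂ := (zmultiplesHom ℂ v).coprod (zmultiplesHom ℂ w) with hfdef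
  have hf : ∀ ab : ℤ × ℤ, f ab = ab.1 • v + ab.2 • w := fun ab => rfl
  have hrange : f.range = S := by
    apply le_antisymm
    · rintro _ ⟨⟨a, b⟩, rfl⟩
      exact add_mem (zsmul_mem (subset_closure (by simp)) a)
        (zsmul_mem (subset_closure (by simp)) b)
    · rw [hSdef, closure_le]
      intro x hx
      simp only [Set.mem_insert_iff, Set.mem_singleton_iff] at hx
      rcases hx with rfl | rfl
      · exact ⟨(1, 0), by simp [hf]⟩
      · exact ⟨(0, 1), by simp [hf]⟩
  have hinj : Function.Injective f := by
    rw [injective_iff_map_eq_zero]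
    rintro ⟨a, b⟩ hab
    rw [hf] at hab
    have h2 : (a : ℝ) • v + (b : ℝ) • w = 0 := by
      rw [Int.cast_smul_eq_zsmul, Int.cast_smul_eq_zsmul]; exact hab
    obtain ⟨ha, hb⟩ := LinearIndependent.pair_iff.mp hvw _ _ h2
    have ha' : a = 0 := by exact_mod_cast ha
    have hb' : b = 0 := by exact_mod_cast hb
    simp [ha', hb', Prod.ext_iff]
  let e : (ℤ × ℤ) ≃+ S :=
    (AddMonoidHom.ofInjective hinj).trans (AddEquiv.addSubgroupCongr hrange)
  have he : ∀ y : ℤ × ℤ, ((e y : S) : ℂ) = f y := fun y => rfl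
  let π : ℤ × ℤ →+ ZMod ℓ × ZMod ℓ :=
    (Int.castAddHom (ZMod ℓ)).prodMap (Int.castAddHom (ZMod ℓ))
  let g : S →+ ZMod ℓ × ZMod ℓ := π.comp e.symm.toAddMonoidHom
  have hπ : ∀ y : ℤ × ℤ, π y = ((y.1 : ZMod ℓ), (y.2 : ZMod ℓ)) := fun y => rfl
  have hcoe : ∀ x : S, e.symm.toAddMonoidHom x = e.symm x := fun x => rfl
  have hker : g.ker = ((ℓ : ℂ) • S).addSubgroupOf S := by
    ext x
    simp only [AddMonoidHom.mem_ker, AddSubgroup.mem_addSubgroupOf]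
    have hx : ((x : ℂ)) = f (e.symm x) := by
      conv_lhs => rw [← e.apply_symm_apply x]
      exact he _
    constructor
    · intro h
      rw [AddMonoidHom.comp_apply, hcoe, hπ, Prod.ext_iff] at h
      obtain ⟨h1, h2⟩ := h
      obtain ⟨a', ha'⟩ := (ZMod.intCast_zmod_eq_zero_iff_dvd _ _).mp h1
      obtain ⟨b', hb'⟩ := (ZMod.intCast_zmod_eq_zero_iff_dvd _ _).mp h2
      have hy : e.symm x = (ℓ : ℤ) • (a', b') := by
        have hps : ((ℓ : ℤ) • ((a', b') : ℤ × ℤ)) = ((ℓ : ℤ) * a', (ℓ : ℤ) * b') := by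
          simp [Prod.smul_def, smul_eq_mul]
        rw [hps]
        exact Prod.ext ha' hb'
      refine mem_smul.mpr ⟨f (a', b'), hrange ▸ ⟨(a', b'), rfl⟩, ?_⟩
      rw [hx, hy, map_zsmul, zsmul_eq_mul]
      push_cast
      ring
    · intro h
      obtain ⟨s, hs, hsx⟩ := mem_smul.mp h
      rw [← hrange] at hs
      obtain ⟨y', rfl⟩ := hs
      have : f ((ℓ : ℤ) • y') = (x : ℂ) := by
        rw [map_zsmul, zsmul_eq_mul]
        push_cast
        exact hsx
      rw [hx] at this
      have hy : (ℓ : ℤ) • y' = e.symm x := hinj this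
      rw [AddMonoidHom.comp_apply, hcoe, hπ, ← hy, Prod.ext_iff]
      have hfst : ((ℓ : ℤ) • y').1 = (ℓ : ℤ) * y'.1 := by
        simp [Prod.smul_def, smul_eq_mul]
      have hsnd : ((ℓ : ℤ) • y').2 = (ℓ : ℤ) * y'.2 := by
        simp [Prod.smul_def, smul_eq_mul]
      constructor
      · show ((((ℓ:ℤ) • y').1 : ℤ) : ZMod ℓ) = (0 : ZMod ℓ)
        rw [hfst]
        exact (ZMod.intCast_zmod_eq_zero_iff_dvd _ _).mpr ⟨y'.1, rfl⟩
      · show ((((ℓ:ℤ) • y').2 : ℤ) : ZMod ℓ) = (0 : ZMod ℓ)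
        rw [hsnd]
        exact (ZMod.intCast_zmod_eq_zero_iff_dvd _ _).mpr ⟨y'.2, rfl⟩
  have hgsurj : Function.Surjective g := by
    have h1 : Function.Surjective π :=
      Function.Surjective.prodMap ZMod.intCast_surjective ZMod.intCast_surjective
    exact h1.comp e.symm.surjective
  show (((ℓ : ℂ) • S).addSubgroupOf S).index = ℓ ^ 2
  rw [← hker, AddSubgroup.index_ker]
  rw [(AddMonoidHom.range_eq_top).mpr hgsurj]
  rw [Nat.card_congr AddSubgroup.topEquiv.toEquiv, Nat.card_prod, Nat.card_zmod]
  ring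

end LatAux

/-- Let `M ⊊ L` be plane lattices with `[L : M] = ℓ` prime, both proper
fractional ideals of a common order `O` in an imaginary quadratic field, and
let `N = N(L)` be the norm of `L` (so `L·L̄ = N·O`).  Then
`p = (1/N)·L̄·M` is a proper ideal of `O` with `[O : p] = ℓ`, `p` is a
maximal ideal of `O`, and `M = p·L`. -/
theorem between_lattice_is_prime_ideal (O : Subring ℂ)
    (hO : IsLattice O.toAddSubgroup) (ℓ : ℕ) (hℓ : ℓ.Prime)
    (L M : AddSubgroup ℂ) (hLlat : IsLattice L) (hMlat : IsLattice M)
    (hfrac : ∀ z ∈ L, ∃ x ∈ O, ∃ y ∈ O, y ≠ 0 ∧ z = x / y)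
    (hLproper : {α : ℂ | ∀ z ∈ L, α * z ∈ L} = (O : Set ℂ))
    (hMproper : {α : ℂ | ∀ z ∈ M, α * z ∈ M} = (O : Set ℂ))
    (hML : M ≤ L) (hMne : M ≠ L)
    (hidx : (M.addSubgroupOf L).index = ℓ)
    (N : ℝ) (hN : 0 < N)
    (hnorm : latMul L (conjLat L) = ((N : ℂ)) • O.toAddSubgroup)
    (p : AddSubgroup ℂ) (hp : p = ((N : ℂ)⁻¹) • latMul (conjLat L) M) :
    p ≤ O.toAddSubgroup ∧
    (∀ a ∈ O, ∀ z ∈ p, a * z ∈ p) ∧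
    {α : ℂ | ∀ z ∈ p, α * z ∈ p} = (O : Set ℂ) ∧
    (p.addSubgroupOf O.toAddSubgroup).index = ℓ ∧
    (p ≠ O.toAddSubgroup ∧
      ∀ q : AddSubgroup ℂ, q ≤ O.toAddSubgroup →
        (∀ a ∈ O, ∀ z ∈ q, a * z ∈ q) → p ≤ q → q = p ∨ q = O.toAddSubgroup) ∧
    M = latMul p L := by
  classical
  set OA := O.toAddSubgroup with hOAdef
  set Lb := conjLat L with hLbdef
  have hNne : (N : ℂ) ≠ 0 := by exact_mod_cast hN.ne'
  have hMO : ∀ α ∈ (O : Set ℂ), ∀ z ∈ M, α * z ∈ M := by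
    intro α hα; rw [← hMproper] at hα; exact hα
  have hLO : ∀ α ∈ (O : Set ℂ), ∀ z ∈ L, α * z ∈ L := by
    intro α hα; rw [← hLproper] at hα; exact hα
  have hOM : latMul OA M = M := by
    apply le_antisymm
    · rw [LatAux.latMul_le]; intro x hx y hy; exact hMO x hx y hy
    · intro m hm
      have h1 : (1 : ℂ) * m ∈ latMul OA M := LatAux.mem_latMul O.one_mem hm
      rwa [one_mul] at h1
  have hOL : latMul OA L = L := by
    apply le_antisymm
    · rw [LatAux.latMul_le]; intro x hx y hy; exact hLO x hx y hy
    · intro m hm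
      have h1 : (1 : ℂ) * m ∈ latMul OA L := LatAux.mem_latMul O.one_mem hm
      rwa [one_mul] at h1
  have hMOc : latMul M OA = M := by rw [LatAux.latMul_comm]; exact hOM
  have hkey : latMul (latMul Lb M) L = (N : ℂ) • M := by
    rw [LatAux.latMul_comm Lb M, LatAux.latMul_assoc, LatAux.latMul_comm Lb L, hnorm,
      LatAux.latMul_smul, hMOc]
  have hMpL : M = latMul p L := by
    rw [hp, LatAux.smul_latMul, hkey, smul_smul, inv_mul_cancel₀ hNne, one_smul]
  have hpO : p ≤ OA := by
    intro α hα
    have h1 : α ∈ {α : ℂ | ∀ z ∈ L, α * z ∈ L} := by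
      intro z hz
      apply hML
      rw [hMpL]
      exact LatAux.mem_latMul hα hz
    rw [hLproper] at h1
    exact h1
  have hOp : latMul OA p = p := by
    rw [hp, LatAux.latMul_smul]
    congr 1
    rw [← LatAux.latMul_assoc, LatAux.latMul_comm OA Lb, LatAux.latMul_assoc, hOM]
  have hOp_elem : ∀ a ∈ O, ∀ z ∈ p, a * z ∈ p := by
    intro a ha z hz
    rw [← hOp]
    exact LatAux.mem_latMul ha hz
  have hproper : {α : ℂ | ∀ z ∈ p, α * z ∈ p} = (O : Set ℂ) := by
    apply Set.eq_of_subset_of_subset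
    · intro α hα
      rw [← hMproper]
      intro m hm
      rw [hMpL] at hm ⊢
      have hT : latMul p L ≤ (latMul p L).comap (AddMonoidHom.mulLeft α) := by
        rw [LatAux.latMul_le]
        intro x hx y hy
        refine AddSubgroup.mem_comap.mpr ?_
        show α * (x * y) ∈ latMul p L
        rw [← mul_assoc]
        exact LatAux.mem_latMul (hα x hx) hy
      exact hT hm
    · intro α hα z hz
      exact hOp_elem α hα z hz
  have hOform : OA = (N : ℂ)⁻¹ • latMul Lb L := by
    rw [LatAux.latMul_comm, hnorm, smul_smul, inv_mul_cancel₀ hNne, one_smul]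
  have hlL_le_M : (ℓ : ℂ) • L ≤ M := by
    intro x hx
    obtain ⟨z, hz, rfl⟩ := LatAux.mem_smul.mp hx
    have h1 : (M.addSubgroupOf L).index • (⟨z, hz⟩ : L) ∈ M.addSubgroupOf L :=
      AddSubgroup.nsmul_index_mem _ _
    rw [hidx, AddSubgroup.mem_addSubgroupOf] at h1
    have h2 : ((ℓ • (⟨z, hz⟩ : L) : L) : ℂ) = (ℓ : ℂ) * z := by
      push_cast
      rw [nsmul_eq_mul]
    rwa [h2] at h1
  have hlO_le_p : (ℓ : ℂ) • OA ≤ p := by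
    rw [hOform, hp, smul_smul, mul_comm, ← smul_smul]
    refine LatAux.smul_mono _ ?_
    rw [← LatAux.latMul_smul]
    exact LatAux.latMul_mono le_rfl hlL_le_M
  have rO : ((ℓ : ℂ) • OA).relIndex OA = ℓ ^ 2 :=
    LatAux.relindex_smul_nat OA hO ℓ hℓ.ne_zero
  have hpO_ne : p ≠ OA := by
    intro h
    apply hMne
    rw [hMpL, h, hOL]
  have hr_ne_one : p.relIndex OA ≠ 1 := by
    intro h
    exact hpO_ne (le_antisymm hpO (AddSubgroup.relIndex_eq_one.mp h))
  have hr_dvd : p.relIndex OA ∣ ℓ ^ 2 := by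
    rw [← rO]
    exact AddSubgroup.relIndex_dvd_of_le_left OA hlO_le_p
  have hr_ne_sq : p.relIndex OA ≠ ℓ ^ 2 := by
    intro hr
    have hmul := AddSubgroup.relIndex_mul_relIndex ((ℓ : ℂ) • OA) p OA hlO_le_p hpO
    rw [hr, rO] at hmul
    have hsq_pos : 0 < ℓ ^ 2 := pow_pos hℓ.pos 2
    have hs : ((ℓ : ℂ) • OA).relIndex p = 1 :=
      Nat.eq_of_mul_eq_mul_right hsq_pos (by rw [hmul, one_mul])
    have hple : p ≤ (ℓ : ℂ) • OA := AddSubgroup.relIndex_eq_one.mp hs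
    have hpeq : p = (ℓ : ℂ) • OA := le_antisymm hple hlO_le_p
    have hMeq : M = (ℓ : ℂ) • L := by rw [hMpL, hpeq, LatAux.smul_latMul, hOL]
    have h2 : M.relIndex L = ℓ ^ 2 := by
      rw [hMeq]
      exact LatAux.relindex_smul_nat L hLlat ℓ hℓ.ne_zero
    have h3 : M.relIndex L = ℓ := hidx
    rw [h3] at h2
    nlinarith [hℓ.one_lt]
  have hrel : p.relIndex OA = ℓ := by
    obtain ⟨k, hk2, hkeq⟩ := (Nat.dvd_prime_pow hℓ).mp hr_dvd
    interval_cases k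
    · rw [pow_zero] at hkeq; exact absurd hkeq hr_ne_one
    · rw [pow_one] at hkeq; exact hkeq
    · exact absurd hkeq hr_ne_sq
  have hmax : ∀ q : AddSubgroup ℂ, q ≤ OA → (∀ a ∈ O, ∀ z ∈ q, a * z ∈ q) → p ≤ q →
      q = p ∨ q = OA := by
    intro q hqO _ hpq
    have hmul : p.relIndex q * q.relIndex OA = ℓ := by
      rw [AddSubgroup.relIndex_mul_relIndex p q OA hpq hqO, hrel]
    rcases hℓ.eq_one_or_self_of_dvd _ (Dvd.intro_left _ hmul) with hb | hb
    · right
      exact le_antisymm hqO (AddSubgroup.relIndex_eq_one.mp hb)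
    · left
      have ha : p.relIndex q = 1 := by
        rw [hb] at hmul
        exact Nat.eq_of_mul_eq_mul_right hℓ.pos (by rw [hmul, one_mul])
      exact le_antisymm (AddSubgroup.relIndex_eq_one.mp ha) hpq
  exact ⟨hpO, hOp_elem, hproper, hrel, ⟨hpO_ne, hmax⟩, hMpL⟩
end

section
/- Suppose n₁ and n₂, both less than the prime ℓ, are norms of two ℝ-linearly independent vectors v₁, v₂ in an index-ℓ sublattice M of the Eisenstein integers ℤ[ω]. Then {v₁, v₂} is a ℤ-basis of M, and in fact a Minkowski reduced basis (the angle between them, after possibly negating one vector, lies in [π/3, 2π/3]). -/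
/-!
Write `A(u, w) = Im (conj u * w)` for the signed area spanned by `u` and `w`. On `ℤ[ω]` it takes
values in `(√3 / 2) ℤ`, and if `ℓ` does not divide `A(u, w) / (√3 / 2)` for some `u, w ∈ M`, then
Cramer's rule `A(u, w) z = A(z, w) u + A(u, z) w` together with `ℓ ℤ[ω] ⊆ M` forces `M = ℤ[ω]`.
So `A(v₁, v₂) = k ℓ √3 / 2` with `k ≠ 0`, while `A(v₁, v₂)² ≤ n₁ n₂ ≤ ℓ²`; hence `k = ±1`. Cramer's
rule then writes every `z ∈ M` as an integral combination of `v₁, v₂`, and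
`⟪v₁, v₂⟫² = n₁ n₂ - 3ℓ² / 4` is small enough for `{v₁, v₂}` to be Lagrange–Gauss reduced.
-/

/-- The primitive cube root of unity `ω = e^{2πi/3}`. -/
noncomputable def ω : ℂ := Complex.exp (2 * Real.pi * Complex.I / 3)

/-- The Eisenstein lattice `ℤ[ω] ⊂ ℂ`. -/
noncomputable def Eisenstein : AddSubgroup ℂ := AddSubgroup.closure {1, ω}

/-- `{v, w}` is a Minkowski reduced basis of the plane lattice `M`:  it is a
ℤ-basis, `v` is a shortest nonzero vector of `M`, and `w` is shortest among
vectors of `M` that are `ℝ`-linearly independent from `v`. -/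
def IsReducedBasis (M : AddSubgroup ℂ) (v w : ℂ) : Prop :=
  v ∈ M ∧ w ∈ M ∧ LinearIndependent ℝ ![v, w] ∧
  M = AddSubgroup.closure {v, w} ∧
  (∀ u ∈ M, u ≠ 0 → ‖v‖ ≤ ‖u‖) ∧
  (∀ u ∈ M, LinearIndependent ℝ ![v, u] → ‖w‖ ≤ ‖u‖)

open ComplexConjugate RealInnerProductSpace

section ReducedBasis

variable {E : Type*} [NormedAddCommGroup E] [InnerProductSpace ℝ E]

lemma one_le_sq_sub_abs_mul_abs_add_sq {m n : ℤ} (h : m ≠ 0 ∨ n ≠ 0) :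
    1 ≤ m ^ 2 - |m| * |n| + n ^ 2 := by
  rcases h with h | h <;>
    nlinarith [Int.one_le_abs h, sq_abs m, sq_abs n, abs_nonneg m, abs_nonneg n,
      sq_nonneg (|m| - |n|)]

lemma sq_sub_abs_mul_abs_mul_add_le_norm_sq {v w : E} (hvw : 2 * |⟪v, w⟫| ≤ ‖v‖ ^ 2)
    (m n : ℝ) : (m ^ 2 - |m| * |n|) * ‖v‖ ^ 2 + n ^ 2 * ‖w‖ ^ 2 ≤ ‖m • v + n • w‖ ^ 2 := by
  rw [norm_add_sq_real, norm_smul, norm_smul, inner_smul_left, inner_smul_right,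
    Real.norm_eq_abs, Real.norm_eq_abs, mul_pow, mul_pow, sq_abs, sq_abs]
  have h := mul_le_mul_of_nonneg_left hvw (mul_nonneg (abs_nonneg m) (abs_nonneg n))
  have h' := neg_abs_le (m * n * ⟪v, w⟫)
  simp only [abs_mul, RCLike.conj_to_real] at h h' ⊢
  nlinarith

lemma norm_le_norm_zsmul_add_zsmul {v w : E} (hvw : 2 * |⟪v, w⟫| ≤ ‖v‖ ^ 2) (hle : ‖v‖ ≤ ‖w‖)
    {m n : ℤ} (h : m ≠ 0 ∨ n ≠ 0) :
    ‖v‖ ≤ ‖m • v + n • w‖ := by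
  have hmn : (1 : ℝ) ≤ m ^ 2 - |(m : ℝ)| * |(n : ℝ)| + n ^ 2 := by
    exact_mod_cast one_le_sq_sub_abs_mul_abs_add_sq h
  have hQ := sq_sub_abs_mul_abs_mul_add_le_norm_sq hvw m n
  rw [Int.cast_smul_eq_zsmul, Int.cast_smul_eq_zsmul] at hQ
  refine pow_le_pow_iff_left₀ (norm_nonneg _) (norm_nonneg _) two_ne_zero |>.mp ?_
  nlinarith [pow_le_pow_left₀ (norm_nonneg v) hle 2, sq_nonneg (n : ℝ), norm_nonneg v]

lemma norm_right_le_norm_zsmul_add_zsmul {v w : E} (hvw : 2 * |⟪v, w⟫| ≤ ‖v‖ ^ 2)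
    (hle : ‖v‖ ≤ ‖w‖) {m n : ℤ} (hn : n ≠ 0) :
    ‖w‖ ≤ ‖m • v + n • w‖ := by
  have hmn : (1 : ℝ) ≤ m ^ 2 - |(m : ℝ)| * |(n : ℝ)| + n ^ 2 := by
    exact_mod_cast one_le_sq_sub_abs_mul_abs_add_sq (Or.inr hn)
  have hQ := sq_sub_abs_mul_abs_mul_add_le_norm_sq hvw m n
  rw [Int.cast_smul_eq_zsmul, Int.cast_smul_eq_zsmul] at hQ
  have hvw' := pow_le_pow_left₀ (norm_nonneg v) hle 2
  refine pow_le_pow_iff_left₀ (norm_nonneg _) (norm_nonneg _) two_ne_zero |>.mp ?_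
  rcases le_total |(m : ℝ)| |(n : ℝ)| with h | h
  · nlinarith [mul_le_mul_of_nonneg_left hvw' (mul_nonneg (abs_nonneg (m : ℝ)) (sub_nonneg.2 h)),
      sq_abs (m : ℝ)]
  · have : (1 : ℝ) ≤ n ^ 2 := by exact_mod_cast (one_le_sq_iff_one_le_abs n).2 (Int.one_le_abs hn)
    nlinarith [mul_nonneg (abs_nonneg (m : ℝ)) (sub_nonneg.2 h)]

end ReducedBasis

lemma inner_sq_add_im_conj_mul_sq (u w : ℂ) :
    ⟪u, w⟫ ^ 2 + (conj u * w).im ^ 2 = ‖u‖ ^ 2 * ‖w‖ ^ 2 := by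
  simp only [Complex.inner, Complex.sq_norm, Complex.normSq_apply, Complex.mul_re,
    Complex.mul_im, Complex.conj_re, Complex.conj_im]
  ring

lemma linearIndependent_pair_iff_im_conj_mul_ne_zero {u w : ℂ} :
    LinearIndependent ℝ ![u, w] ↔ (conj u * w).im ≠ 0 := by
  have hdet : (Matrix.gram ℝ ![u, w]).det = (conj u * w).im ^ 2 := by
    simp only [Matrix.det_fin_two, Matrix.gram, Matrix.of_apply, Matrix.cons_val_zero,
      Matrix.cons_val_one, Matrix.cons_val_fin_one, Complex.inner, Complex.mul_re, Complex.mul_im,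
      Complex.conj_re, Complex.conj_im]
    ring
  rw [← Matrix.det_gram_ne_zero_iff_linearIndependent, hdet, pow_ne_zero_iff two_ne_zero]

lemma im_conj_mul_smul_eq (u w z : ℂ) :
    ((conj u * w).im : ℂ) * z = (conj z * w).im * u + (conj u * z).im * w := by
  apply Complex.ext <;>
    simp only [Complex.mul_re, Complex.mul_im, Complex.add_re, Complex.add_im, Complex.ofReal_re,
      Complex.ofReal_im, Complex.conj_re, Complex.conj_im] <;>
    ring

lemma isReducedBasis_of_closure_eq {M : AddSubgroup ℂ} {v w : ℂ}
    (hind : LinearIndependent ℝ ![v, w]) (hM : M = AddSubgroup.closure {v, w})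
    (hvw : 2 * |⟪v, w⟫| ≤ ‖v‖ ^ 2) (hle : ‖v‖ ≤ ‖w‖) : IsReducedBasis M v w := by
  subst hM
  refine ⟨AddSubgroup.subset_closure (by simp), AddSubgroup.subset_closure (by simp), hind, rfl,
    ?_, ?_⟩
  · rintro u hu hu0
    obtain ⟨m, n, rfl⟩ := AddSubgroup.mem_closure_pair.mp hu
    refine norm_le_norm_zsmul_add_zsmul hvw hle (not_and_or.mp ?_)
    rintro ⟨rfl, rfl⟩
    simp at hu0
  · rintro u hu hvu
    obtain ⟨m, n, rfl⟩ := AddSubgroup.mem_closure_pair.mp hu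
    refine norm_right_le_norm_zsmul_add_zsmul hvw hle ?_
    rintro rfl
    refine linearIndependent_pair_iff_im_conj_mul_ne_zero.mp hvu ?_
    simp only [zero_smul, add_zero, zsmul_eq_mul, Complex.mul_im, Complex.mul_re, Complex.conj_re,
      Complex.conj_im, Complex.intCast_re, Complex.intCast_im]
    ring

lemma isReducedBasis_or_of_closure_eq {M : AddSubgroup ℂ} {v w : ℂ}
    (hind : LinearIndependent ℝ ![v, w]) (hM : M = AddSubgroup.closure {v, w})
    (hvw : 2 * |⟪v, w⟫| ≤ min (‖v‖ ^ 2) (‖w‖ ^ 2)) :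
    IsReducedBasis M v w ∨ IsReducedBasis M w v := by
  rcases le_total ‖v‖ ‖w‖ with h | h
  · exact .inl (isReducedBasis_of_closure_eq hind hM (hvw.trans (min_le_left _ _)) h)
  · refine .inr (isReducedBasis_of_closure_eq (LinearIndependent.pair_symm_iff.mp hind)
      (hM.trans (by rw [Set.pair_comm])) ?_ h)
    rw [real_inner_comm]
    exact hvw.trans (min_le_right _ _)

lemma ω_im : ω.im = √3 / 2 := by
  rw [ω, show 2 * Real.pi * Complex.I / 3 = ((Real.pi - Real.pi / 3 : ℝ) : ℂ) * Complex.I by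
    push_cast; ring, Complex.exp_ofReal_mul_I_im, Real.sin_pi_sub, Real.sin_pi_div_three]

lemma exists_im_conj_mul_eq_of_mem_eisenstein {u w : ℂ} (hu : u ∈ Eisenstein)
    (hw : w ∈ Eisenstein) : ∃ δ : ℤ, (conj u * w).im = δ * (√3 / 2) := by
  obtain ⟨a, b, rfl⟩ := AddSubgroup.mem_closure_pair.mp hu
  obtain ⟨c, d, rfl⟩ := AddSubgroup.mem_closure_pair.mp hw
  refine ⟨a * d - b * c, ?_⟩
  simp only [zsmul_eq_mul, mul_one, map_add, map_mul, map_intCast, Complex.mul_im, Complex.add_im,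
    Complex.mul_re, Complex.add_re, Complex.intCast_re, Complex.intCast_im, Complex.conj_re,
    Complex.conj_im, ω_im, Int.cast_sub, Int.cast_mul]
  ring

lemma AddSubgroup.mem_of_zsmul_mem_of_isCoprime {G : Type*} [AddGroup G] {H : AddSubgroup G}
    {m n : ℤ} (hmn : IsCoprime m n) {z : G} (hm : m • z ∈ H) (hn : n • z ∈ H) : z ∈ H := by
  obtain ⟨r, s, h⟩ := hmn
  simpa [← mul_zsmul, ← add_zsmul, h] using H.add_mem (H.zsmul_mem hm r) (H.zsmul_mem hn s)

lemma zsmul_mem_closure_pair_of_mem_eisenstein {u w z : ℂ} (hu : u ∈ Eisenstein)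
    (hw : w ∈ Eisenstein) (hz : z ∈ Eisenstein) {δ : ℤ} (hδ : (conj u * w).im = δ * (√3 / 2)) :
    δ • z ∈ AddSubgroup.closure {u, w} := by
  obtain ⟨δ₁, hδ₁⟩ := exists_im_conj_mul_eq_of_mem_eisenstein hz hw
  obtain ⟨δ₂, hδ₂⟩ := exists_im_conj_mul_eq_of_mem_eisenstein hu hz
  have hcramer := im_conj_mul_smul_eq u w z
  rw [hδ, hδ₁, hδ₂] at hcramer
  have hs : ((√3 / 2 : ℝ) : ℂ) ≠ 0 := by exact_mod_cast (by positivity : (0 : ℝ) < √3 / 2).ne'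
  refine AddSubgroup.mem_closure_pair.mpr ⟨δ₁, δ₂, mul_left_cancel₀ hs ?_⟩
  simp only [zsmul_eq_mul]
  push_cast at hcramer ⊢
  linear_combination -hcramer

lemma exists_im_conj_mul_eq_of_relIndex_eq_prime {ℓ : ℕ} (hℓ : ℓ.Prime) {M : AddSubgroup ℂ}
    (hM : M ≤ Eisenstein) (hidx : M.relIndex Eisenstein = ℓ) {u w : ℂ} (hu : u ∈ M)
    (hw : w ∈ M) : ∃ k : ℤ, (conj u * w).im = ℓ * k * (√3 / 2) := by
  obtain ⟨δ, hδ⟩ := exists_im_conj_mul_eq_of_mem_eisenstein (hM hu) (hM hw)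
  suffices ((ℓ : ℤ) ∣ δ) by
    obtain ⟨k, rfl⟩ := this
    exact ⟨k, by rw [hδ]; push_cast; ring⟩
  by_contra hδℓ
  have hcop : IsCoprime (ℓ : ℤ) δ :=
    (Nat.prime_iff_prime_int.mp hℓ).coprime_iff_not_dvd.mpr hδℓ
  -- Both `ℓ • z` and `δ • z` lie in `M`, so all of `ℤ[ω]` would.
  have hEM : Eisenstein ≤ M := fun z hz ↦
    AddSubgroup.mem_of_zsmul_mem_of_isCoprime hcop
      (by simpa [← hidx] using M.nsmul_relIndex_mem hz)
      (AddSubgroup.closure_le _ |>.mpr (Set.pair_subset hu hw)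
        (zsmul_mem_closure_pair_of_mem_eisenstein (hM hu) (hM hw) hz hδ))
  exact hℓ.one_lt.ne' (hidx ▸ AddSubgroup.relIndex_eq_one.mpr hEM)

lemma eq_closure_pair_of_im_conj_mul_dvd {M : AddSubgroup ℂ} {v₁ v₂ : ℂ} (hv₁ : v₁ ∈ M)
    (hv₂ : v₂ ∈ M) (h0 : (conj v₁ * v₂).im ≠ 0)
    (hdvd : ∀ z ∈ M, ∃ m n : ℤ, (conj z * v₂).im = m * (conj v₁ * v₂).im ∧
      (conj v₁ * z).im = n * (conj v₁ * v₂).im) :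
    M = AddSubgroup.closure {v₁, v₂} := by
  refine le_antisymm (fun z hz ↦ ?_) (AddSubgroup.closure_le _ |>.mpr (Set.pair_subset hv₁ hv₂))
  obtain ⟨m, n, hm, hn⟩ := hdvd z hz
  have hcramer := im_conj_mul_smul_eq v₁ v₂ z
  rw [hm, hn] at hcramer
  refine AddSubgroup.mem_closure_pair.mpr
    ⟨m, n, mul_left_cancel₀ (Complex.ofReal_ne_zero.mpr h0) ?_⟩
  simp only [zsmul_eq_mul]
  push_cast at hcramer ⊢
  linear_combination -hcramer

lemma sq_eq_one_of_sq_mul_sqrt_three_div_two_le {ℓ : ℝ} (hℓ : 0 < ℓ) {k : ℤ} (hk : k ≠ 0)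
    (h : (ℓ * k * (√3 / 2)) ^ 2 ≤ ℓ ^ 2) : k ^ 2 = 1 := by
  have h3 : (3 * k ^ 2 : ℝ) ≤ 4 := by
    rw [mul_pow, mul_pow, div_pow, Real.sq_sqrt (by norm_num : (0 : ℝ) ≤ 3)] at h
    nlinarith [pow_pos hℓ 2]
  have h3' : 3 * k ^ 2 ≤ 4 := by exact_mod_cast h3
  nlinarith [Int.one_le_abs hk, sq_abs k]

lemma two_mul_abs_le_of_sq_eq {p x y L : ℝ} (hp : p ^ 2 = x * y - 3 / 4 * L ^ 2) (hx : 0 ≤ x)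
    (hxL : x ≤ L) (hyL : y ≤ L) : 2 * |p| ≤ x := by
  have h := abs_le_of_sq_le_sq (a := 2 * p) (b := x) (by nlinarith) hx
  rwa [abs_mul, abs_two] at h

/-- If an index-`ℓ` sublattice `M` of `ℤ[ω]` contains `ℝ`-linearly
independent vectors `v₁, v₂` of norms `n₁, n₂ ≤ ℓ`, then `{v₁, v₂}` is a
ℤ-basis of `M`, indeed a Minkowski reduced basis; in particular (after
possibly negating one vector) the angle between them lies in `[π/3, 2π/3]`,
i.e. `|⟨v₁, v₂⟩| ≤ ½ |v₁| |v₂|`. -/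
theorem short_vectors_give_reduced_basis (ℓ : ℕ) (hℓ : ℓ.Prime)
    (M : AddSubgroup ℂ) (hM : M ≤ Eisenstein)
    (hidx : (M.addSubgroupOf Eisenstein).index = ℓ)
    (v₁ v₂ : ℂ) (hv₁ : v₁ ∈ M) (hv₂ : v₂ ∈ M)
    (hind : LinearIndependent ℝ ![v₁, v₂])
    (n₁ n₂ : ℕ) (hn₁ : ‖v₁‖ ^ 2 = n₁) (hn₂ : ‖v₂‖ ^ 2 = n₂)
    (h₁ : n₁ ≤ ℓ) (h₂ : n₂ ≤ ℓ) :
    M = AddSubgroup.closure {v₁, v₂} ∧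
    (IsReducedBasis M v₁ v₂ ∨ IsReducedBasis M v₂ v₁) ∧
    |(v₁ * starRingEnd ℂ v₂).re| ≤ (1 / 2) * (‖v₁‖ * ‖v₂‖) := by
  have hA := @exists_im_conj_mul_eq_of_relIndex_eq_prime ℓ hℓ M hM hidx
  have hA0 := linearIndependent_pair_iff_im_conj_mul_ne_zero.mp hind
  have hℓ₁ : ‖v₁‖ ^ 2 ≤ ℓ := hn₁ ▸ by exact_mod_cast h₁
  have hℓ₂ : ‖v₂‖ ^ 2 ≤ ℓ := hn₂ ▸ by exact_mod_cast h₂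
  have hprod : ‖v₁‖ ^ 2 * ‖v₂‖ ^ 2 ≤ (ℓ : ℝ) ^ 2 := by
    rw [sq (ℓ : ℝ)]; exact mul_le_mul hℓ₁ hℓ₂ (by positivity) (by positivity)
  have hpyth := inner_sq_add_im_conj_mul_sq v₁ v₂
  obtain ⟨k, hk⟩ := hA hv₁ hv₂
  have hk2 : (k : ℝ) ^ 2 = 1 := by
    exact_mod_cast sq_eq_one_of_sq_mul_sqrt_three_div_two_le (Nat.cast_pos.mpr hℓ.pos)
      (by rintro rfl; simp [hk] at hA0) (by rw [← hk]; nlinarith [sq_nonneg ⟪v₁, v₂⟫])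
  -- Since `A(v₁, v₂) = ±ℓ √3 / 2`, every area in `ℓ (√3 / 2) ℤ` is an integral multiple of it.
  have hMeq : M = AddSubgroup.closure {v₁, v₂} :=
    eq_closure_pair_of_im_conj_mul_dvd hv₁ hv₂ hA0 fun z hz ↦ by
      obtain ⟨k₁, hk₁⟩ := hA hz hv₂
      obtain ⟨k₂, hk₂⟩ := hA hv₁ hz
      refine ⟨k₁ * k, k₂ * k, ?_, ?_⟩
      · rw [hk₁, hk]; push_cast; linear_combination (-(ℓ * k₁ * (√3 / 2) : ℝ)) * hk2
      · rw [hk₂, hk]; push_cast; linear_combination (-(ℓ * k₂ * (√3 / 2) : ℝ)) * hk2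
  have hinner : ⟪v₁, v₂⟫ ^ 2 = ‖v₁‖ ^ 2 * ‖v₂‖ ^ 2 - 3 / 4 * ℓ ^ 2 := by
    rw [← hpyth, hk, mul_pow, mul_pow, div_pow, Real.sq_sqrt (by norm_num), hk2]
    ring
  have hre : (v₁ * conj v₂).re = ⟪v₁, v₂⟫ := by rw [real_inner_comm, Complex.inner]
  refine ⟨hMeq, isReducedBasis_or_of_closure_eq hind hMeq (le_min ?_ ?_), ?_⟩
  · exact two_mul_abs_le_of_sq_eq hinner (sq_nonneg _) hℓ₁ hℓ₂
  · exact two_mul_abs_le_of_sq_eq (by rw [hinner]; ring) (sq_nonneg _) hℓ₂ hℓ₁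
  · rw [hre]
    refine abs_le_of_sq_le_sq ?_ (by positivity)
    rw [mul_pow, mul_pow, hinner]
    nlinarith
end

section
/- Let M ⊆ ℤ[ω] be a sublattice of prime index ℓ with Minkowski reduced basis {v, w}, where at least one of the principal ideals (v), (w) of ℤ[ω] is not divisible by a prime ideal over ℓ. Then (v) and (w) are coprime ideals of ℤ[ω] (they share no prime ideal factor). -/
/-- The Eisenstein integers `ℤ[ω]` as a subring of `ℂ`. -/
noncomputable def EisR : Subring ℂ := Subring.closure {ω}

/-! The ideal `I = (v, w)` of `ℤ[ω]` contains `M`, so its index divides `ℓ`. Index `1` means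
`I = ℤ[ω]`, i.e. `v` and `w` are coprime. Otherwise `I = M` as groups, so `v` is a shortest
nonzero element of the ideal `I`. Every complex number lies at distance `< 1` from `ℤ[ω]`, so
division by `v` leaves a remainder in `I` shorter than `v`, hence zero: `I = (v)`. An ideal of
prime index is maximal, so `v` is a prime; it divides `ℓ ∈ I` and `w ∈ I`, which contradicts the
hypothesis on `v` or on `w`. -/

theorem AddSubgroup.eq_top_or_eq_of_index_prime {G : Type*} [AddGroup G] {H K : AddSubgroup G}
    (hH : H.index.Prime) (hHK : H ≤ K) : K = ⊤ ∨ K = H := by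
  rcases hH.eq_one_or_self_of_dvd _ (index_dvd_of_le hHK) with hK | hK
  · exact .inl (index_eq_one.mp hK)
  · have h := relIndex_mul_index hHK
    rw [hK, mul_eq_right₀ hH.ne_zero, relIndex_eq_one] at h
    exact .inr (le_antisymm h hHK)

theorem Ideal.isMaximal_of_index_prime {R : Type*} [Ring R] {I : Ideal R}
    (hI : I.toAddSubgroup.index.Prime) : I.IsMaximal := by
  refine ⟨⟨fun htop => ?_, fun K hIK => ?_⟩⟩
  · rw [htop, Submodule.top_toAddSubgroup, AddSubgroup.index_top] at hI
    exact Nat.not_prime_one hI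
  · rcases AddSubgroup.eq_top_or_eq_of_index_prime hI (K := K.toAddSubgroup) hIK.le with hK | hK
    · exact Submodule.toAddSubgroup_eq_top.mp hK
    · exact absurd (Submodule.toAddSubgroup_injective hK) hIK.ne'

theorem Ideal.natCast_index_mem {R : Type*} [Ring R] (I : Ideal R) :
    (I.toAddSubgroup.index : R) ∈ I := by
  simpa using AddSubgroup.nsmul_index_mem I.toAddSubgroup 1

theorem ω_eq : ω = ⟨-(1 / 2), √3 / 2⟩ := by
  have h : 2 * (Real.pi : ℂ) * Complex.I / 3 = ((Real.pi - Real.pi / 3 : ℝ) : ℂ) * Complex.I := by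
    push_cast; ring
  rw [ω, h, Complex.exp_mul_I, ← Complex.ofReal_cos, ← Complex.ofReal_sin, Real.cos_pi_sub,
    Real.sin_pi_sub, Real.cos_pi_div_three, Real.sin_pi_div_three]
  apply Complex.ext <;> simp

theorem EisR.exists_norm_sub_lt_one (z : ℂ) : ∃ q ∈ EisR, ‖z - q‖ < 1 := by
  -- `b` rounds the `ω`-coordinate of `z`, then `a` its real part; the errors are `≤ 1/2`, `≤ √3/4`.
  set b := round (2 * z.im / √3)
  set a := round (z.re + b / 2)
  have hω : ω ∈ EisR := Subring.subset_closure rfl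
  refine ⟨a + b * ω, add_mem (intCast_mem _ a) (mul_mem (intCast_mem _ b) hω), ?_⟩
  have h3 : 0 < √3 := by positivity
  have hre : (z - (a + b * ω)).re = z.re + b / 2 - a := by
    simp only [ω_eq, Complex.sub_re, Complex.add_re, Complex.mul_re, Complex.intCast_re,
      Complex.intCast_im]
    ring
  have him : (z - (a + b * ω)).im = √3 / 2 * (2 * z.im / √3 - b) := by
    simp only [ω_eq, Complex.sub_im, Complex.add_im, Complex.mul_im, Complex.intCast_re,
      Complex.intCast_im]
    field_simp
    ring
  have hre_le : |(z - (a + b * ω)).re| ≤ 1 / 2 := hre ▸ abs_sub_round _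
  have him_le : |(z - (a + b * ω)).im| ≤ √3 / 4 := by
    rw [him, abs_mul, abs_of_pos (by positivity)]
    nlinarith [abs_sub_round (2 * z.im / √3)]
  have h3lt : √3 < 2 := (Real.sqrt_lt' two_pos).mpr (by norm_num)
  linarith [Complex.norm_le_abs_re_add_abs_im (z - (a + b * ω))]

theorem Ideal.eq_span_singleton_of_norm_le {S : Subring ℂ}
    (hS : ∀ z : ℂ, ∃ q ∈ S, ‖z - q‖ < 1) {I : Ideal S} {v : S} (hv : v ≠ 0) (hvI : v ∈ I)
    (hmin : ∀ u ∈ I, u ≠ 0 → ‖(v : ℂ)‖ ≤ ‖(u : ℂ)‖) : I = Ideal.span {v} := by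
  refine le_antisymm (fun x hx => ?_) (Ideal.span_le.mpr (Set.singleton_subset_iff.mpr hvI))
  obtain ⟨q, hqS, hq⟩ := hS (x / v)
  have hv0 : (v : ℂ) ≠ 0 := by exact_mod_cast hv
  set r : S := x - ⟨q, hqS⟩ * v
  have hr : (r : ℂ) = (x / v - q) * v := by
    simp only [r, AddSubgroupClass.coe_sub, MulMemClass.coe_mul]
    field_simp
  have hr0 : r = 0 := by
    by_contra hr0
    have hle := hmin r (I.sub_mem hx (I.mul_mem_left _ hvI)) hr0
    rw [hr, norm_mul] at hle
    nlinarith [norm_pos_iff.mpr hv0]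
  exact Ideal.mem_span_singleton'.mpr ⟨⟨q, hqS⟩, (sub_eq_zero.mp hr0).symm⟩

theorem Subring.closure_pair_addSubgroupOf_le_span_pair {R : Type*} [Ring R] {S : Subring R}
    {v w : R} (hv : v ∈ S) (hw : w ∈ S) :
    (AddSubgroup.closure {v, w}).addSubgroupOf S.toAddSubgroup ≤
      (Ideal.span {⟨v, hv⟩, ⟨w, hw⟩} : Ideal S).toAddSubgroup := by
  have hle : AddSubgroup.closure {v, w} ≤
      (Ideal.span {⟨v, hv⟩, ⟨w, hw⟩} : Ideal S).toAddSubgroup.map S.subtype.toAddMonoidHom := by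
    rw [AddSubgroup.closure_le, Set.insert_subset_iff, Set.singleton_subset_iff]
    exact ⟨⟨⟨v, hv⟩, Ideal.subset_span (by simp), rfl⟩,
      ⟨⟨w, hw⟩, Ideal.subset_span (by simp), rfl⟩⟩
  intro x hx
  obtain ⟨y, hy, hyx⟩ := hle hx
  rwa [← Subtype.ext hyx]

theorem reduced_basis_coprime_general (ℓ : ℕ) (hℓ : ℓ.Prime)
    (M : AddSubgroup ℂ)
    (hidx : (M.addSubgroupOf EisR.toAddSubgroup).index = ℓ)
    (v w : ℂ) (hv : v ∈ EisR) (hw : w ∈ EisR)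
    (hred : IsReducedBasis M v w)
    (hnd : (¬ ∃ π : EisR, Prime π ∧ π ∣ (ℓ : EisR) ∧ π ∣ ⟨v, hv⟩) ∨
           (¬ ∃ π : EisR, Prime π ∧ π ∣ (ℓ : EisR) ∧ π ∣ ⟨w, hw⟩)) :
    IsCoprime (⟨v, hv⟩ : EisR) (⟨w, hw⟩ : EisR) := by
  obtain ⟨-, -, hind, rfl, hmin, -⟩ := hred
  set v' : EisR := ⟨v, hv⟩
  set w' : EisR := ⟨w, hw⟩
  set I := Ideal.span {v', w'}
  rcases AddSubgroup.eq_top_or_eq_of_index_prime (hidx ▸ hℓ)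
    (Subring.closure_pair_addSubgroupOf_le_span_pair hv hw) with htop | hIM
  · rwa [Submodule.toAddSubgroup_eq_top, Ideal.eq_top_iff_one, Ideal.mem_span_pair] at htop
  have hIidx : I.toAddSubgroup.index = ℓ := hIM ▸ hidx
  have hv0 : v' ≠ 0 := fun h => hind.ne_zero 0 (congrArg Subtype.val h)
  have hIv : I = Ideal.span {v'} :=
    Ideal.eq_span_singleton_of_norm_le EisR.exists_norm_sub_lt_one hv0
      (Ideal.subset_span (by simp)) fun u hu hu0 => hmin u (hIM.le hu) (by simpa using hu0)
  have hprime : Prime v' := by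
    rw [← Ideal.span_singleton_prime hv0, ← hIv]
    exact (Ideal.isMaximal_of_index_prime (hIidx ▸ hℓ)).isPrime
  have hℓv : v' ∣ ℓ := Ideal.mem_span_singleton.mp (hIv ▸ hIidx ▸ I.natCast_index_mem)
  have hwv : v' ∣ w' := Ideal.mem_span_singleton.mp (hIv ▸ Ideal.subset_span (by simp))
  exfalso
  rcases hnd with h | h
  exacts [h ⟨_, hprime, hℓv, dvd_rfl⟩, h ⟨_, hprime, hℓv, hwv⟩]

/-- Let `M ⊆ ℤ[ω]` be a sublattice of prime index `ℓ` with Minkowski reduced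
basis `{v, w}`, and suppose at least one of the principal ideals `(v)`, `(w)`
of `ℤ[ω]` is not divisible by a prime over `ℓ` (since `ℤ[ω]` is a PID, prime
ideals over `ℓ` are generated by prime elements `π ∣ ℓ`).  Then `(v)` and
`(w)` share no prime ideal factor, i.e. `v` and `w` are coprime in `ℤ[ω]`. -/
theorem reduced_basis_coprime (ℓ : ℕ) (hℓ : ℓ.Prime)
    (M : AddSubgroup ℂ) (hM : M ≤ EisR.toAddSubgroup)
    (hidx : (M.addSubgroupOf EisR.toAddSubgroup).index = ℓ)
    (v w : ℂ) (hv : v ∈ EisR) (hw : w ∈ EisR)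
    (hred : IsReducedBasis M v w)
    (hnd : (¬ ∃ π : EisR, Prime π ∧ π ∣ (ℓ : EisR) ∧ π ∣ ⟨v, hv⟩) ∨
           (¬ ∃ π : EisR, Prime π ∧ π ∣ (ℓ : EisR) ∧ π ∣ ⟨w, hw⟩)) :
    IsCoprime (⟨v, hv⟩ : EisR) (⟨w, hw⟩ : EisR) :=
  reduced_basis_coprime_general ℓ hℓ M hidx v w hv hw hred hnd
end

section
/- Let M be an index-ℓ sublattice of ℤ[ω] (ℓ prime), v a shortest nonzero vector of M, and w a shortest vector of M outside ℝ·v. (a) If |v|² ≤ (√3/2)ℓ then |w|² ≥ (√3/2)ℓ. (b) If |v|² ≤ (3/4)ℓ then |w|² ≥ ℓ. -/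
open ComplexConjugate

namespace AddSubgroup

variable {G : Type*} [AddCommGroup G]

theorem mem_of_isCoprime {H : AddSubgroup G} {m n : ℤ} (hmn : IsCoprime m n) {x : G}
    (hm : m • x ∈ H) (hn : n • x ∈ H) : x ∈ H := by
  obtain ⟨u, t, hut⟩ := hmn
  have hx : x = u • m • x + t • n • x := by rw [smul_smul, smul_smul, ← add_smul, hut, one_smul]
  rw [hx]
  exact add_mem (zsmul_mem hm u) (zsmul_mem hn t)

theorem prime_dvd_det_of_relIndex_eq {g₁ g₂ : G} {H : AddSubgroup G} {ℓ : ℕ} (hℓ : ℓ.Prime)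
    (hidx : H.relIndex (closure {g₁, g₂}) = ℓ) {a b c d : ℤ}
    (h₁ : a • g₁ + b • g₂ ∈ H) (h₂ : c • g₁ + d • g₂ ∈ H) : (ℓ : ℤ) ∣ a * d - b * c := by
  by_contra hndvd
  have hcop : IsCoprime (ℓ : ℤ) (a * d - b * c) :=
    (Nat.prime_iff_prime_int.mp hℓ).coprime_iff_not_dvd.mpr hndvd
  have hℓsmul : ∀ g ∈ closure {g₁, g₂}, (ℓ : ℤ) • g ∈ H := fun g hg => by
    simpa [hidx] using H.nsmul_relIndex_mem hg
  have hg₁ : g₁ ∈ H := by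
    refine mem_of_isCoprime hcop (hℓsmul _ (subset_closure (by simp))) ?_
    have : (a * d - b * c) • g₁ = d • (a • g₁ + b • g₂) - b • (c • g₁ + d • g₂) := by module
    exact this ▸ sub_mem (zsmul_mem h₁ d) (zsmul_mem h₂ b)
  have hg₂ : g₂ ∈ H := by
    refine mem_of_isCoprime hcop (hℓsmul _ (subset_closure (by simp))) ?_
    have : (a * d - b * c) • g₂ = a • (c • g₁ + d • g₂) - c • (a • g₁ + b • g₂) := by module
    exact this ▸ sub_mem (zsmul_mem h₂ a) (zsmul_mem h₁ c)
  have hle : closure {g₁, g₂} ≤ H := (closure_le H).mpr (Set.insert_subset hg₁ (by simpa))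
  exact hℓ.ne_one (hidx ▸ relIndex_eq_one.mpr hle)

end AddSubgroup

namespace Complex

theorem exists_real_mul_eq_of_im_conj_mul_eq_zero {v w : ℂ} (hv : v ≠ 0)
    (h : (conj v * w).im = 0) : ∃ r : ℝ, w = r * v := by
  refine ⟨(conj v * w).re / normSq v, ?_⟩
  have hre : ((conj v * w).re : ℂ) = conj v * w := Complex.ext rfl (by simp [h])
  have hns : (normSq v : ℂ) ≠ 0 := by exact_mod_cast (normSq_pos.mpr hv).ne'
  push_cast
  rw [hre, div_mul_eq_mul_div, eq_div_iff hns, ← mul_conj]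
  ring

end Complex

namespace Eisenstein

theorem omega_eq_exp : ω = Complex.exp (((Real.pi - Real.pi / 3 : ℝ) : ℂ) * Complex.I) := by
  rw [ω]
  push_cast
  ring_nf

theorem omega_re : ω.re = -(1 / 2) := by
  rw [omega_eq_exp, Complex.exp_ofReal_mul_I_re, Real.cos_pi_sub, Real.cos_pi_div_three]

theorem omega_im : ω.im = Real.sqrt 3 / 2 := by
  rw [omega_eq_exp, Complex.exp_ofReal_mul_I_im, Real.sin_pi_sub, Real.sin_pi_div_three]

theorem mem_iff {x : ℂ} : x ∈ Eisenstein ↔ ∃ a b : ℤ, (a : ℂ) + b * ω = x := by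
  simp [Eisenstein, AddSubgroup.mem_closure_pair, zsmul_eq_mul]

theorem im_conj_mul (a b c d : ℤ) :
    (conj ((a : ℂ) + b * ω) * (c + d * ω)).im = Real.sqrt 3 / 2 * (a * d - b * c : ℤ) := by
  simp only [Complex.mul_im, Complex.add_re, Complex.add_im, map_add, map_mul,
    Complex.conj_re, Complex.conj_im, Complex.mul_re, map_intCast, Complex.intCast_re,
    Complex.intCast_im, omega_re, omega_im]
  push_cast
  ring

theorem covolume_le_norm_mul_norm {ℓ : ℕ} (hℓ : ℓ.Prime) {M : AddSubgroup ℂ}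
    (hM : M ≤ Eisenstein) (hidx : (M.addSubgroupOf Eisenstein).index = ℓ) {v w : ℂ}
    (hv : v ∈ M) (hvne : v ≠ 0) (hw : w ∈ M) (hwout : ¬ ∃ r : ℝ, w = (r : ℂ) * v) :
    Real.sqrt 3 / 2 * ℓ ≤ ‖v‖ * ‖w‖ := by
  obtain ⟨a, b, rfl⟩ := mem_iff.mp (hM hv)
  obtain ⟨c, d, rfl⟩ := mem_iff.mp (hM hw)
  have hdvd : (ℓ : ℤ) ∣ a * d - b * c :=
    AddSubgroup.prime_dvd_det_of_relIndex_eq (g₁ := 1) (g₂ := ω) hℓ hidx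
      (by simpa [zsmul_eq_mul] using hv) (by simpa [zsmul_eq_mul] using hw)
  have hdet : a * d - b * c ≠ 0 := fun h0 => hwout <|
    Complex.exists_real_mul_eq_of_im_conj_mul_eq_zero hvne (by rw [im_conj_mul, h0]; simp)
  have hℓdet : (ℓ : ℝ) ≤ |((a * d - b * c : ℤ) : ℝ)| := by
    exact_mod_cast Int.le_of_dvd (abs_pos.mpr hdet) ((dvd_abs _ _).mpr hdvd)
  calc Real.sqrt 3 / 2 * ℓ ≤ |(conj ((a : ℂ) + b * ω) * (c + d * ω)).im| := by
        rw [im_conj_mul, abs_mul, abs_of_nonneg (by positivity)]; gcongr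
    _ ≤ ‖(a : ℂ) + b * ω‖ * ‖(c : ℂ) + d * ω‖ :=
        (Complex.abs_im_le_norm _).trans_eq (by rw [norm_mul, Complex.norm_conj])

end Eisenstein

theorem sq_le_mul_sq_of_le_mul {A B x y : ℝ} (hA : 0 ≤ A) (h : A ≤ x * y) (hx : x ^ 2 ≤ B) :
    A ^ 2 ≤ B * y ^ 2 :=
  calc A ^ 2 ≤ (x * y) ^ 2 := pow_le_pow_left₀ hA h 2
    _ = x ^ 2 * y ^ 2 := mul_pow x y 2
    _ ≤ B * y ^ 2 := mul_le_mul_of_nonneg_right hx (sq_nonneg y)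

theorem second_minimum_lower_bound_general (ℓ : ℕ) (hℓ : ℓ.Prime)
    (M : AddSubgroup ℂ) (hM : M ≤ Eisenstein)
    (hidx : (M.addSubgroupOf Eisenstein).index = ℓ)
    (v w : ℂ) (hv : v ∈ M) (hvne : v ≠ 0)
    (hw : w ∈ M) (hwout : ¬ ∃ r : ℝ, w = (r : ℂ) * v) :
    (‖v‖ ^ 2 ≤ (Real.sqrt 3 / 2) * ℓ →
      (Real.sqrt 3 / 2) * ℓ ≤ ‖w‖ ^ 2) ∧
    (‖v‖ ^ 2 ≤ (3 / 4) * ℓ → (ℓ : ℝ) ≤ ‖w‖ ^ 2) := by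
  have hcov := Eisenstein.covolume_le_norm_mul_norm hℓ hM hidx hv hvne hw hwout
  have hℓpos : (0 : ℝ) < ℓ := by exact_mod_cast hℓ.pos
  have hcovpos : 0 < Real.sqrt 3 / 2 * ℓ := by positivity
  have hsqrt3 : Real.sqrt 3 ^ 2 = 3 := Real.sq_sqrt (by norm_num)
  refine ⟨fun hvle => ?_, fun hvle => ?_⟩
  · have h := sq_le_mul_sq_of_le_mul hcovpos.le hcov hvle
    rw [sq] at h
    exact le_of_mul_le_mul_left h hcovpos
  · have h := sq_le_mul_sq_of_le_mul hcovpos.le hcov hvle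
    rw [mul_pow, div_pow, hsqrt3] at h
    exact le_of_mul_le_mul_left (by linarith : (ℓ : ℝ) * ℓ ≤ ℓ * ‖w‖ ^ 2) hℓpos

/-- Let `M` be an index-`ℓ` sublattice of `ℤ[ω]` (`ℓ` prime), `v` a shortest
nonzero vector of `M`, and `w` a shortest vector of `M` outside `ℝ·v`.
(a) If `|v|² ≤ (√3/2)ℓ` then `|w|² ≥ (√3/2)ℓ`.
(b) If `|v|² ≤ (3/4)ℓ` then `|w|² ≥ ℓ`. -/
theorem second_minimum_lower_bound (ℓ : ℕ) (hℓ : ℓ.Prime)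
    (M : AddSubgroup ℂ) (hM : M ≤ Eisenstein)
    (hidx : (M.addSubgroupOf Eisenstein).index = ℓ)
    (v w : ℂ) (hv : v ∈ M) (hvne : v ≠ 0)
    (hvmin : ∀ u ∈ M, u ≠ 0 → ‖v‖ ≤ ‖u‖)
    (hw : w ∈ M) (hwout : ¬ ∃ r : ℝ, w = (r : ℂ) * v)
    (hwmin : ∀ u ∈ M, (¬ ∃ r : ℝ, u = (r : ℂ) * v) →
      ‖w‖ ≤ ‖u‖) :
    (‖v‖ ^ 2 ≤ (Real.sqrt 3 / 2) * ℓ →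
      (Real.sqrt 3 / 2) * ℓ ≤ ‖w‖ ^ 2) ∧
    (‖v‖ ^ 2 ≤ (3 / 4) * ℓ → (ℓ : ℝ) ≤ ‖w‖ ^ 2) :=
  second_minimum_lower_bound_general ℓ hℓ M hM hidx v w hv hvne hw hwout
end

section
/- Let D ≡ 1 (mod 4) be a negative integer. There exist integers a, b with D = b² − 4a², |b| ≤ a, and gcd(a, b) = 1 if and only if −D factors as −D = F·G with F, G positive, gcd(F, G) = 1, and 1/3 ≤ F/G ≤ 3. -/
/-- Characterization of odd discriminants `D < 0` admitting a reduced
well-rounded primitive binary quadratic form `(a, b, a)`:  for `D ≡ 1 (mod 4)`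
negative, there exist integers `a, b` with `D = b² − 4a²`, `|b| ≤ a` and
`gcd(a, b) = 1` if and only if `−D = F·G` with `F, G` positive, coprime and
`1/3 ≤ F/G ≤ 3`. -/
theorem odd_discriminant_well_rounded_iff (D : ℤ) (hD : D < 0)
    (hmod : D % 4 = 1) :
    (∃ a b : ℤ, D = b ^ 2 - 4 * a ^ 2 ∧ |b| ≤ a ∧ IsCoprime a b) ↔
    (∃ F G : ℤ, 0 < F ∧ 0 < G ∧ IsCoprime F G ∧ -D = F * G ∧
      G ≤ 3 * F ∧ F ≤ 3 * G) := by
  constructor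
  · rintro ⟨a, b, hDeq, habs, hco⟩
    obtain ⟨hb1, hb2⟩ := abs_le.mp habs
    -- a > 0
    have ha0 : 0 ≤ a := le_trans (abs_nonneg b) habs
    have hapos : 0 < a := by
      rcases ha0.lt_or_eq with h | h
      · exact h
      · exfalso; nlinarith
    -- b is odd
    have hbodd : Odd b := by
      rcases Int.even_or_odd b with ⟨k, hk⟩ | h
      · exfalso
        have : D = 4 * (k ^ 2 - a ^ 2) := by rw [hDeq, hk]; ring
        omega
      · exact h
    obtain ⟨k, hk⟩ := hbodd
    refine ⟨2 * a - b, 2 * a + b, by omega, by omega, ?_, by rw [hDeq]; ring,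
      by omega, by omega⟩
    -- coprimality of 2a - b and 2a + b
    have hc2b : IsCoprime (2 : ℤ) b := ⟨-k, 1, by omega⟩
    have h2ab : IsCoprime (2 * a) b := hc2b.mul_left hco
    have h1 : IsCoprime (2 * a + (-1) * b) b := h2ab.add_mul_right_left (-1)
    have h1' : IsCoprime (2 * a - b) b := by
      have : 2 * a + (-1) * b = 2 * a - b := by ring
      rwa [this] at h1
    have h2 : IsCoprime (2 * a - b) (2 : ℤ) := ⟨-1, a - k, by omega⟩
    have h3 : IsCoprime (2 * a - b) (2 * b) := h2.mul_right h1'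
    have h4 : IsCoprime (2 * a - b) (2 * b + (2 * a - b) * 1) :=
      h3.add_mul_left_right 1
    have : 2 * b + (2 * a - b) * 1 = 2 * a + b := by ring
    rwa [this] at h4
  · rintro ⟨F, G, hF, hG, hco, hFG, h3F, h3G⟩
    -- F and G are odd
    have hFodd : Odd F := by
      rcases Int.even_or_odd F with ⟨m, hm⟩ | h
      · exfalso
        have : -D = 2 * (m * G) := by rw [hFG, hm]; ring
        omega
      · exact h
    have hGodd : Odd G := by
      rcases Int.even_or_odd G with ⟨n, hn⟩ | h
      · exfalso
        have : -D = 2 * (F * n) := by rw [hFG, hn]; ring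
        omega
      · exact h
    obtain ⟨m, hm⟩ := hFodd
    obtain ⟨n, hn⟩ := hGodd
    -- m + n is odd
    have hprod : -D = 4 * (m * n) + 2 * (m + n) + 1 := by
      rw [hFG, hm, hn]; ring
    have hmn : (m + n) % 2 = 1 := by omega
    obtain ⟨t, ht⟩ : ∃ t, m + n = 2 * t + 1 := ⟨(m + n - 1) / 2, by omega⟩
    refine ⟨t + 1, 2 * t + 1 - 2 * m, ?_, ?_, ?_⟩
    · have hn' : n = 2 * t + 1 - m := by omega
      have : D = -(F * G) := by omega
      rw [this, hm, hn, hn']; ring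
    · rw [abs_le]
      constructor <;> nlinarith [hm, hn, ht, h3F, h3G]
    · obtain ⟨u, v, huv⟩ := hco
      have hFa : F = 2 * (t + 1) - (2 * t + 1 - 2 * m) := by omega
      have hGa : G = 2 * (t + 1) + (2 * t + 1 - 2 * m) := by omega
      exact ⟨2 * u + 2 * v, v - u, by
        rw [hFa, hGa] at huv; linear_combination huv⟩
end

section
/- Let D ≡ 0 (mod 4) be a negative integer. There exist integers a, b with D = b² − 4a², |b| ≤ a, and gcd(a, b) = 1 if and only if −D/4 factors as F·G with F, G positive integers, 1/3 ≤ F/G ≤ 3, and gcd((F+G)/2, 2G) = 1. -/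
/-- Characterization of even discriminants `D < 0` admitting a reduced
well-rounded primitive binary quadratic form `(a, b, a)`:  for `D ≡ 0 (mod 4)`
negative, there exist integers `a, b` with `D = b² − 4a²`, `|b| ≤ a` and
`gcd(a, b) = 1` if and only if `−D/4 = F·G` with `F, G` positive integers,
`1/3 ≤ F/G ≤ 3`, `F + G` even (so that `(F+G)/2` is an integer) and
`gcd((F+G)/2, 2G) = 1`. -/
theorem even_discriminant_well_rounded_iff (D : ℤ) (hD : D < 0)
    (hmod : D % 4 = 0) :
    (∃ a b : ℤ, D = b ^ 2 - 4 * a ^ 2 ∧ |b| ≤ a ∧ IsCoprime a b) ↔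
    (∃ F G : ℤ, 0 < F ∧ 0 < G ∧ -D / 4 = F * G ∧
      G ≤ 3 * F ∧ F ≤ 3 * G ∧ 2 ∣ (F + G) ∧
      IsCoprime ((F + G) / 2) (2 * G)) := by
  have h4D : (4 : ℤ) ∣ D := Int.dvd_of_emod_eq_zero hmod
  obtain ⟨k, hk⟩ := h4D
  constructor
  · rintro ⟨a, b, hD2, hab, hcop⟩
    have hbeven : Even b := by
      have h1 : Even (b ^ 2) := by
        refine ⟨2 * a ^ 2 + 2 * k, ?_⟩
        have : b ^ 2 = D + 4 * a ^ 2 := by linarith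
        rw [this, hk]; ring
      simpa [Int.even_pow] using h1
    obtain ⟨b₁, hb₁⟩ := hbeven
    have habs := abs_le.mp hab
    have ha0 : 0 ≤ a := le_trans (abs_nonneg b) hab
    have hsq : 4 * b₁ ^ 2 < 4 * a ^ 2 := by nlinarith [hD, hD2, hb₁]
    have hFpos : 0 < a - b₁ := by nlinarith [sq_nonneg (a + b₁), sq_nonneg (a - b₁)]
    have hGpos : 0 < a + b₁ := by nlinarith [sq_nonneg (a + b₁), sq_nonneg (a - b₁)]
    refine ⟨a - b₁, a + b₁, hFpos, hGpos, ?_, ?_, ?_, ⟨a, by ring⟩, ?_⟩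
    · have hnd : -D = 4 * ((a - b₁) * (a + b₁)) := by
        rw [hD2, hb₁]; ring
      rw [hnd, Int.mul_ediv_cancel_left _ (by norm_num)]
    · linarith [habs.2, hb₁]
    · linarith [habs.1, hb₁]
    · have hhalf : (a - b₁ + (a + b₁)) / 2 = a := by omega
      rw [hhalf]
      have h := hcop.add_mul_left_right 2
      rwa [show b + a * 2 = 2 * (a + b₁) by rw [hb₁]; ring] at h
  · rintro ⟨F, G, hF, hG, hFG, h1, h2, heven, hcop⟩
    obtain ⟨s, hs⟩ := heven
    have hs2 : 2 * s = F + G := by linarith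
    have hDeq : D = -4 * (F * G) := by
      have hdvd : (4 : ℤ) ∣ -D := ⟨-k, by rw [hk]; ring⟩
      have h := Int.ediv_mul_cancel hdvd
      rw [hFG] at h
      linarith
    refine ⟨s, G - F, ?_, ?_, ?_⟩
    · rw [hDeq]; linear_combination (F + G + 2 * s) * hs2
    · rw [abs_le]; constructor <;> linarith
    · have hhalf : (F + G) / 2 = s := by omega
      rw [hhalf] at hcop
      have h := hcop.add_mul_left_right (-2)
      rwa [show 2 * G + s * (-2) = G - F by linarith] at h
end
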